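/- arXiv:1701.02634 — 6 statements merged into one kernel-verified Lean document; each statement's English description precedes it below -/
import Mathlib

section
/- If X_1,...,X_n are i.i.d. uniform on [0,1], then the distribution of the i-th smallest among them equals the marginal distribution of the i-th coordinate under the uniform distribution on the order simplex {0 ≤ x_1 ≤ ... ≤ x_n ≤ 1}. -/
/-!
Almost every `x` has distinct coordinates, and then `Tuple.sort x` is the only permutation `σ`
with `x ∘ σ` strictly increasing. Hence, up to a null set, `{x | x ∘ sort x ∈ T}` is the disjoint
union over the `n!` permutations `σ` of the preimages of `T ∩ {strictly increasing}` under
`x ↦ x ∘ σ`, each of which has the volume of `T ∩ {monotone}` because permuting coordinates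
preserves Lebesgue measure. The theorem is the case `T = {y ∈ [0,1]ⁿ | y i ∈ A}`, since the
cube is invariant under permutations of the coordinates.
-/

open MeasureTheory Function

section Permutations

variable {ι : Type*} [Fintype ι]

theorem volume_setOf_apply_eq_apply {j k : ι} (hjk : j ≠ k) :
    volume {x : ι → ℝ | x j = x k} = 0 := by
  classical
  let L : (ι → ℝ) →ₗ[ℝ] ℝ := LinearMap.proj (R := ℝ) (φ := fun _ : ι => ℝ) j - LinearMap.proj k
  have hL : {x : ι → ℝ | x j = x k} = (LinearMap.ker L : Set (ι → ℝ)) := by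
    ext x
    simp [L, sub_eq_zero]
  rw [hL]
  refine Measure.addHaar_submodule _ _ fun htop => ?_
  have : Pi.single j (1 : ℝ) ∈ LinearMap.ker L := htop ▸ Submodule.mem_top
  simp [L, hjk.symm] at this

theorem ae_injective : ∀ᵐ x : ι → ℝ, Injective x := by
  have : {x : ι → ℝ | ¬ Injective x} ⊆ ⋃ (j) (k) (_ : j ≠ k), {x | x j = x k} := by
    simp only [Injective, not_forall]
    rintro x ⟨j, k, hx, hjk⟩
    simp only [Set.mem_iUnion]
    exact ⟨j, k, hjk, hx⟩
  exact measure_mono_null this <| measure_iUnion_null fun j => measure_iUnion_null fun k =>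
    measure_iUnion_null volume_setOf_apply_eq_apply

theorem measurePreserving_comp_perm (σ : Equiv.Perm ι) :
    MeasurePreserving (fun x : ι → ℝ => x ∘ σ) := by
  convert volume_preserving_arrowCongr' σ.symm (MeasurableEquiv.refl ℝ) (.id volume) using 1
  ext x a
  simp [MeasurableEquiv.arrowCongr', Equiv.arrowCongr']

end Permutations

namespace Tuple

variable {n : ℕ} {α : Type*} [LinearOrder α] {f : Fin n → α}

theorem sort_eq_of_strictMono_comp {σ : Equiv.Perm (Fin n)} (h : StrictMono (f ∘ σ)) :
    sort f = σ :=
  (eq_sort_iff.2 ⟨h.monotone, fun _ _ hij hf => absurd hf (h hij).ne⟩).symm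

theorem strictMono_comp_sort (hf : Injective f) : StrictMono (f ∘ sort f) :=
  (monotone_sort f).strictMono_of_injective (hf.comp (sort f).injective)

end Tuple

section Sorting

variable {n : ℕ}

theorem measurableSet_setOf_strictMono : MeasurableSet {y : Fin n → ℝ | StrictMono y} := by
  simp only [StrictMono, Set.ofPred_forall]
  measurability

theorem setOf_comp_sort_mem_ae_eq_iUnion (T : Set (Fin n → ℝ)) :
    {x : Fin n → ℝ | x ∘ Tuple.sort x ∈ T}
      =ᵐ[volume] ⋃ σ : Equiv.Perm (Fin n), (· ∘ σ) ⁻¹' (T ∩ {y | StrictMono y}) := by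
  refine Filter.eventuallyEq_set.2 (ae_injective.mono fun x hx => ?_)
  simp only [Set.mem_iUnion, Set.mem_preimage, Set.mem_inter_iff, Set.mem_ofPred_eq]
  constructor
  · exact fun h => ⟨Tuple.sort x, h, Tuple.strictMono_comp_sort hx⟩
  · rintro ⟨σ, hT, hσ⟩
    rwa [Tuple.sort_eq_of_strictMono_comp hσ]

theorem volume_setOf_comp_sort_mem (T : Set (Fin n → ℝ)) (hT : MeasurableSet T) :
    volume {x : Fin n → ℝ | x ∘ Tuple.sort x ∈ T}
      = n.factorial * volume (T ∩ {y | Monotone y}) := by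
  set C := T ∩ {y : Fin n → ℝ | StrictMono y}
  have hdisj : Pairwise (Disjoint on fun σ : Equiv.Perm (Fin n) => (· ∘ σ) ⁻¹' C) :=
    fun σ τ hne => Set.disjoint_left.2 fun x hσ hτ => hne <|
      (Tuple.sort_eq_of_strictMono_comp hσ.2).symm.trans (Tuple.sort_eq_of_strictMono_comp hτ.2)
  have hC : MeasurableSet C := hT.inter measurableSet_setOf_strictMono
  have hmeas (σ : Equiv.Perm (Fin n)) : MeasurableSet ((· ∘ σ) ⁻¹' C) :=
    (measurePreserving_comp_perm σ).measurable hC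
  have hvol (σ : Equiv.Perm (Fin n)) : volume ((· ∘ σ) ⁻¹' C) = volume C :=
    (measurePreserving_comp_perm σ).measure_preimage hC.nullMeasurableSet
  have hmono : C =ᵐ[volume] (T ∩ {y | Monotone y} : Set (Fin n → ℝ)) :=
    Filter.eventuallyEq_set.2 <| ae_injective.mono fun y hy => and_congr_right fun _ =>
      ⟨StrictMono.monotone, fun h => h.strictMono_of_injective hy⟩
  calc volume {x : Fin n → ℝ | x ∘ Tuple.sort x ∈ T}
      = volume (⋃ σ : Equiv.Perm (Fin n), (· ∘ σ) ⁻¹' C) :=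
        measure_congr (setOf_comp_sort_mem_ae_eq_iUnion T)
    _ = ∑ σ : Equiv.Perm (Fin n), volume ((· ∘ σ) ⁻¹' C) := by
        rw [measure_iUnion hdisj hmeas, tsum_fintype]
    _ = n.factorial * volume C := by
        simp [hvol, Fintype.card_perm]
    _ = n.factorial * volume (T ∩ {y | Monotone y}) := by rw [measure_congr hmono]

end Sorting

theorem order_statistic_eq_simplex_marginal (n : ℕ) (i : Fin n) (A : Set ℝ)
    (hA : MeasurableSet A) :
    volume {x : Fin n → ℝ | x ∈ Set.Icc (0 : Fin n → ℝ) 1 ∧ x (Tuple.sort x i) ∈ A}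
      = (n.factorial : ENNReal) *
        volume {x : Fin n → ℝ | ((∀ j, x j ∈ Set.Icc (0:ℝ) 1) ∧ Monotone x) ∧ x i ∈ A} := by
  set T := {y : Fin n → ℝ | (∀ j, y j ∈ Set.Icc (0:ℝ) 1) ∧ y i ∈ A}
  have hT : MeasurableSet T := by
    simp only [T, Set.ofPred_and, Set.ofPred_forall]
    measurability
  have hcube (x : Fin n → ℝ) (σ : Equiv.Perm (Fin n)) :
      (∀ j, (x ∘ σ) j ∈ Set.Icc (0:ℝ) 1) ↔ x ∈ Set.Icc (0 : Fin n → ℝ) 1 := by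
    rw [← Set.pi_univ_Icc, Set.mem_univ_pi]
    exact σ.forall_congr_right (q := fun j => x j ∈ Set.Icc (0:ℝ) 1)
  have hsorted : {x : Fin n → ℝ | x ∈ Set.Icc (0 : Fin n → ℝ) 1 ∧ x (Tuple.sort x i) ∈ A}
      = {x | x ∘ Tuple.sort x ∈ T} := by
    ext x
    simp only [Set.mem_ofPred_eq, T, hcube]
    rfl
  have hsimplex : {x : Fin n → ℝ | ((∀ j, x j ∈ Set.Icc (0:ℝ) 1) ∧ Monotone x) ∧ x i ∈ A}
      = T ∩ {y | Monotone y} := by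
    ext x
    simp only [T, Set.mem_ofPred_eq, Set.mem_inter_iff]
    tauto
  rw [hsorted, hsimplex, volume_setOf_comp_sort_mem T hT]
end

section
/- Let C be a finite set of order constraints x_i ≤ x_j on variables x_1,...,x_n defining a partial order (no ties implied), and let P ⊆ [0,1]^n be its admissible polytope. Then the volume of P equals N/n!, where N is the number of linear extensions of the partial order. -/
open MeasureTheory Set Equiv

/-!
Almost every point of `sⁿ` has pairwise distinct coordinates, and such a point `x` is sorted by
exactly one permutation, `Tuple.sort x`. So up to a null set `sⁿ` is the disjoint union of the `n!`
regions `{x ∈ sⁿ | x ∘ σ strictly increasing}`, which are congruent under permutations of the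
coordinates and hence each have volume `vol(s)ⁿ / n!`. A point of such a region satisfies the
constraints `x i ≤ x j`, `(i, j) ∈ C`, exactly when `σ` is a linear extension of `C`.
-/

theorem Real.ae_injective {ι : Type*} [Fintype ι] : ∀ᵐ x : ι → ℝ, Function.Injective x := by
  classical
  have h : {x : ι → ℝ | ¬ Function.Injective x} = ⋃ (i) (j) (_ : i ≠ j),
      (LinearMap.ker (LinearMap.proj (R := ℝ) (φ := fun _ : ι => ℝ) i - LinearMap.proj j) :
        Set (ι → ℝ)) := by
    ext x
    simp [Function.Injective, sub_eq_zero, and_comm]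
  rw [ae_iff, h]
  refine measure_iUnion_null fun i => measure_iUnion_null fun j => measure_iUnion_null fun hij => ?_
  -- the hyperplane `x i = x j` is a proper subspace
  refine Measure.addHaar_submodule _ _ fun htop => ?_
  have := htop ▸ Submodule.mem_top (x := (Pi.single i 1 : ι → ℝ))
  simp [Pi.single_eq_of_ne hij.symm] at this

section

variable {n : ℕ}

def sortedRegion (s : Set ℝ) (σ : Perm (Fin n)) : Set (Fin n → ℝ) :=
  {x | (∀ i, x i ∈ s) ∧ StrictMono (x ∘ σ)}

def orderPolytope (s : Set ℝ) (C : Finset (Fin n × Fin n)) : Set (Fin n → ℝ) :=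
  {x | (∀ i, x i ∈ s) ∧ ∀ p ∈ C, x p.1 ≤ x p.2}

/-- A permutation `σ` encodes the total order `σ 0 < σ 1 < ⋯`. -/
def linearExtensions (C : Finset (Fin n × Fin n)) : Finset (Perm (Fin n)) :=
  {σ | ∀ p ∈ C, σ.symm p.1 ≤ σ.symm p.2}

theorem eq_sort_of_strictMono_comp {x : Fin n → ℝ} {σ : Perm (Fin n)}
    (h : StrictMono (x ∘ σ)) : σ = Tuple.sort x :=
  Tuple.eq_sort_iff.2 ⟨h.monotone, fun _ _ hij heq => absurd heq (h hij).ne⟩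

theorem pairwise_disjoint_sortedRegion (s : Set ℝ) :
    Pairwise fun σ τ : Perm (Fin n) => Disjoint (sortedRegion s σ) (sortedRegion s τ) :=
  fun _ _ hne => Set.disjoint_left.2 fun _ hσ hτ =>
    hne ((eq_sort_of_strictMono_comp hσ.2).trans (eq_sort_of_strictMono_comp hτ.2).symm)

theorem measurableSet_sortedRegion {s : Set ℝ} (hs : MeasurableSet s) (σ : Perm (Fin n)) :
    MeasurableSet (sortedRegion s σ) := by
  have h : sortedRegion s σ = (⋂ i, (fun x => x i) ⁻¹' s) ∩
      ⋂ (i) (j) (_ : i < j), {x : Fin n → ℝ | x (σ i) < x (σ j)} := by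
    ext x
    simp [sortedRegion, StrictMono]
  rw [h]
  exact (MeasurableSet.iInter fun i => measurable_pi_apply i hs).inter <|
    .iInter fun i => .iInter fun j => .iInter fun _ =>
      measurableSet_lt (measurable_pi_apply _) (measurable_pi_apply _)

theorem sortedRegion_eq_preimage (s : Set ℝ) (σ : Perm (Fin n)) :
    sortedRegion s σ = MeasurableEquiv.piCongrLeft (fun _ => ℝ) σ.symm ⁻¹' sortedRegion s 1 := by
  have hcomp (x : Fin n → ℝ) : MeasurableEquiv.piCongrLeft (fun _ => ℝ) σ.symm x = x ∘ σ := by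
    funext i
    simp [MeasurableEquiv.piCongrLeft, Equiv.piCongrLeft_apply]
  ext x
  simp only [sortedRegion, mem_preimage, mem_ofPred_eq, hcomp, Perm.coe_one,
    Function.comp_id, Function.comp_apply]
  exact and_congr_left fun _ => σ.forall_congr_right.symm

theorem volume_sortedRegion_eq {s : Set ℝ} (hs : MeasurableSet s) (σ : Perm (Fin n)) :
    volume (sortedRegion s σ) = volume (sortedRegion s (1 : Perm (Fin n))) := by
  rw [sortedRegion_eq_preimage,
    (volume_measurePreserving_piCongrLeft _ _).measure_preimage
      (measurableSet_sortedRegion hs 1).nullMeasurableSet]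

theorem volume_biUnion_sortedRegion {s : Set ℝ} (hs : MeasurableSet s)
    (F : Finset (Perm (Fin n))) :
    volume (⋃ σ ∈ F, sortedRegion s σ) = F.card * volume (sortedRegion s (1 : Perm (Fin n))) := by
  rw [measure_biUnion_finset (fun σ _ τ _ h => pairwise_disjoint_sortedRegion s h)
    (fun σ _ => measurableSet_sortedRegion hs σ)]
  simp [volume_sortedRegion_eq hs]

theorem sortedRegion_subset_orderPolytope (s : Set ℝ) {C : Finset (Fin n × Fin n)}
    {σ : Perm (Fin n)} (hσ : σ ∈ linearExtensions C) :
    sortedRegion s σ ⊆ orderPolytope s C := by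
  rintro x ⟨hxs, hmono⟩
  refine ⟨hxs, fun p hp => ?_⟩
  simpa using hmono.monotone ((Finset.mem_filter.1 hσ).2 p hp)

theorem strictMono_comp_sort {x : Fin n → ℝ} (hinj : Function.Injective x) :
    StrictMono (x ∘ Tuple.sort x) :=
  (Tuple.monotone_sort x).strictMono_of_injective (hinj.comp (Equiv.injective _))

theorem sort_mem_linearExtensions {s : Set ℝ} {C : Finset (Fin n × Fin n)} {x : Fin n → ℝ}
    (hx : x ∈ orderPolytope s C) (hinj : Function.Injective x) :
    Tuple.sort x ∈ linearExtensions C := by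
  refine Finset.mem_filter.2 ⟨Finset.mem_univ _, fun p hp => ?_⟩
  refine le_of_not_gt fun hlt => (hx.2 p hp).not_gt ?_
  simpa using strictMono_comp_sort hinj hlt

theorem orderPolytope_ae_eq_biUnion (s : Set ℝ) (C : Finset (Fin n × Fin n)) :
    orderPolytope s C =ᵐ[volume] ⋃ σ ∈ linearExtensions C, sortedRegion s σ := by
  refine Filter.eventuallyEq_set.2 <| Real.ae_injective.mono fun x hinj =>
    ⟨fun hx => ?_, fun hx => ?_⟩
  · exact mem_iUnion₂.2 ⟨_, sort_mem_linearExtensions hx hinj, hx.1, strictMono_comp_sort hinj⟩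
  · obtain ⟨σ, hσ, hxσ⟩ := mem_iUnion₂.1 hx
    exact sortedRegion_subset_orderPolytope s hσ hxσ

theorem volume_orderPolytope {s : Set ℝ} (hs : MeasurableSet s) (C : Finset (Fin n × Fin n)) :
    volume (orderPolytope s C) =
      (linearExtensions C).card * volume (sortedRegion s (1 : Perm (Fin n))) := by
  rw [measure_congr (orderPolytope_ae_eq_biUnion s C), volume_biUnion_sortedRegion hs]

theorem factorial_mul_volume_sortedRegion_one {s : Set ℝ} (hs : MeasurableSet s) :
    n.factorial * volume (sortedRegion s (1 : Perm (Fin n))) = volume s ^ n := by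
  have hcube : orderPolytope s (∅ : Finset (Fin n × Fin n)) = univ.pi fun _ => s := by
    ext x
    simp [orderPolytope]
  have hall : linearExtensions (∅ : Finset (Fin n × Fin n)) = Finset.univ := by
    simp [linearExtensions]
  have := volume_orderPolytope hs (∅ : Finset (Fin n × Fin n))
  rw [hcube, hall, Finset.card_univ, Fintype.card_perm, Fintype.card_fin, volume_pi_pi] at this
  simpa using this.symm

end

theorem order_polytope_volume_eq_linear_extensions_general (n : ℕ) (C : Finset (Fin n × Fin n)) :
    volume {x : Fin n → ℝ | (∀ i, x i ∈ Set.Icc (0:ℝ) 1) ∧ ∀ p ∈ C, x p.1 ≤ x p.2}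
      = (Fintype.card {σ : Equiv.Perm (Fin n) // ∀ p ∈ C, σ.symm p.1 ≤ σ.symm p.2} : ENNReal)
        / (n.factorial : ENNReal) := by
  have hsimplex :
      n.factorial * volume (sortedRegion (Icc (0 : ℝ) 1) (1 : Perm (Fin n))) = 1 := by
    simpa using factorial_mul_volume_sortedRegion_one (n := n) (measurableSet_Icc (a := 0) (b := 1))
  rw [ENNReal.eq_div_iff (by positivity) (ENNReal.natCast_ne_top _), Fintype.card_subtype]
  change _ * volume (orderPolytope (Icc 0 1) C) = _
  rw [volume_orderPolytope measurableSet_Icc, mul_left_comm, hsimplex, mul_one]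
  rfl

theorem order_polytope_volume_eq_linear_extensions (n : ℕ) (C : Finset (Fin n × Fin n))
    (hanti : ∀ i j : Fin n, Relation.ReflTransGen (fun a b => (a, b) ∈ C) i j →
      Relation.ReflTransGen (fun a b => (a, b) ∈ C) j i → i = j) :
    volume {x : Fin n → ℝ | (∀ i, x i ∈ Set.Icc (0:ℝ) 1) ∧ ∀ p ∈ C, x p.1 ≤ x p.2}
      = (Fintype.card {σ : Equiv.Perm (Fin n) // ∀ p ∈ C, σ.symm p.1 ≤ σ.symm p.2} : ENNReal)
        / (n.factorial : ENNReal) :=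
  order_polytope_volume_eq_linear_extensions_general n C
end

section
/- Counterexample to containment for U-top-k: consider variables x_l ≤ x_h with x_l, x_h uniform on the triangle {0 ≤ x_l ≤ x_h ≤ 1}, and constants x_f⁺ = 0.7, x_f⁻ = 0.69. Then P(x_h is the maximum) = 0.51 > 0.49 = P(x_f⁺ is the maximum), so the most likely top-1 is (x_h); but P((x_f⁺, x_f⁻) is the top-2 sequence) = 0.4761, which exceeds the probability of every top-2 sequence beginning with x_h (namely P((x_h,x_f⁺)) = 0.42 and P((x_h,x_l)) = 0.09). -/
/-!
In the coordinates `(x_l, x_h)` each event is, up to null sets, a region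
`{x_h ∈ [a, b], f x_h ≤ x_l ≤ g x_h}`, so slicing at fixed `x_h` gives its area as
`∫ x_h in a..b, g - f`. The maximum is `x_h` iff `x_h > 0.7` (area `(1 - 0.7²)/2`) and `x_f⁺`
iff `x_h < 0.7` (area `0.7²/2`); the top-2 is `(x_f⁺, x_f⁻)` iff `x_h < 0.69` (area `0.69²/2`),
`(x_h, x_f⁺)` iff `x_l < 0.7 < x_h` (area `0.7 · 0.3`) and `(x_h, x_l)` iff `0.7 < x_l < x_h`
(area `0.3²/2`). Dividing by the area `1/2` of the triangle gives the probabilities.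
-/

open MeasureTheory Set

theorem volume_eq_intervalIntegral_of_slices {S : Set (ℝ × ℝ)} (hS : MeasurableSet S)
    {a b : ℝ} (hab : a ≤ b) {f g : ℝ → ℝ} (hfg : ∀ y ∈ Ioo a b, f y ≤ g y)
    (hint : IntervalIntegrable (fun y => g y - f y) volume a b)
    (hsub : ∀ x y, (x, y) ∈ S → y ∈ Icc a b ∧ x ∈ Icc (f y) (g y))
    (hsup : ∀ y ∈ Ioo a b, ∀ x ∈ Ioo (f y) (g y), (x, y) ∈ S) :
    volume S = ENNReal.ofReal (∫ y in a..b, (g y - f y)) := by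
  have hslice : ∀ y ∈ Ioo a b,
      volume ((fun x => (x, y)) ⁻¹' S) = ENNReal.ofReal (g y - f y) := by
    intro y hy
    refine le_antisymm ?_ ?_
    · rw [← Real.volume_Icc]
      exact measure_mono fun x hx => (hsub x y hx).2
    · rw [← Real.volume_Ioo]
      exact measure_mono fun x hx => hsup y hy x hx
  have hsupp : (fun y => volume ((fun x => (x, y)) ⁻¹' S)).support ⊆ Icc a b := by
    intro y hy
    obtain ⟨x, hx⟩ := nonempty_of_measure_ne_zero hy
    exact (hsub x y hx).1
  rw [Measure.volume_eq_prod, Measure.prod_apply_symm hS,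
    ← setLIntegral_eq_of_support_subset hsupp,
    Measure.restrict_congr_set Ioo_ae_eq_Icc.symm, setLIntegral_congr_fun measurableSet_Ioo hslice,
    intervalIntegral.integral_of_le hab, integral_Ioc_eq_integral_Ioo,
    ofReal_integral_eq_lintegral_ofReal
      (((intervalIntegrable_iff_integrableOn_Ioc_of_le hab).1 hint).mono_set Ioo_subset_Ioc_self)
      ((ae_restrict_iff' measurableSet_Ioo).2 (ae_of_all _ fun y hy => sub_nonneg.2 (hfg y hy)))]

theorem volume_triangle :
    volume {p : ℝ × ℝ | 0 ≤ p.1 ∧ p.1 ≤ p.2 ∧ p.2 ≤ 1} = ENNReal.ofReal (1/2) := by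
  rw [volume_eq_intervalIntegral_of_slices (a := 0) (b := 1) (f := fun _ => 0)
    (g := fun y => y) (by measurability) zero_le_one (fun y hy => by grind)
    ((by fun_prop : Continuous _).intervalIntegrable _ _) (fun x y h => by grind)
    (fun y hy x hx => by grind)]
  norm_num [integral_id]

theorem volume_xh_isMax :
    volume ({p : ℝ × ℝ | 0 ≤ p.1 ∧ p.1 ≤ p.2 ∧ p.2 ≤ 1} ∩
      {p : ℝ × ℝ | max p.1 (max (7/10) (69/100)) < p.2}) = ENNReal.ofReal (51/200) := by
  rw [volume_eq_intervalIntegral_of_slices (a := 7/10) (b := 1) (f := fun _ => 0)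
    (g := fun y => y) (by measurability) (by norm_num) (fun y hy => by grind)
    ((by fun_prop : Continuous _).intervalIntegrable _ _)
    (fun x y h => by simp only [mem_inter_iff, mem_ofPred_eq, max_lt_iff] at h; grind)
    (fun y hy x hx => by grind [max_lt_iff])]
  norm_num [integral_id]

theorem volume_xfPlus_isMax :
    volume ({p : ℝ × ℝ | 0 ≤ p.1 ∧ p.1 ≤ p.2 ∧ p.2 ≤ 1} ∩
      {p : ℝ × ℝ | max p.1 (max p.2 (69/100)) < 7/10}) = ENNReal.ofReal (49/200) := by
  rw [volume_eq_intervalIntegral_of_slices (a := 0) (b := 7/10) (f := fun _ => 0)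
    (g := fun y => y) (by measurability) (by norm_num) (fun y hy => by grind)
    ((by fun_prop : Continuous _).intervalIntegrable _ _)
    (fun x y h => by simp only [mem_inter_iff, mem_ofPred_eq, max_lt_iff] at h; grind)
    (fun y hy x hx => by grind [max_lt_iff])]
  norm_num [integral_id]

theorem volume_topTwo_xfPlus_xfMinus :
    volume ({p : ℝ × ℝ | 0 ≤ p.1 ∧ p.1 ≤ p.2 ∧ p.2 ≤ 1} ∩
      {p : ℝ × ℝ | max p.1 p.2 < 69/100}) = ENNReal.ofReal (4761/20000) := by
  rw [volume_eq_intervalIntegral_of_slices (a := 0) (b := 69/100) (f := fun _ => 0)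
    (g := fun y => y) (by measurability) (by norm_num) (fun y hy => by grind)
    ((by fun_prop : Continuous _).intervalIntegrable _ _)
    (fun x y h => by simp only [mem_inter_iff, mem_ofPred_eq, max_lt_iff] at h; grind)
    (fun y hy x hx => by grind [max_lt_iff])]
  norm_num [integral_id]

theorem volume_topTwo_xh_xfPlus :
    volume ({p : ℝ × ℝ | 0 ≤ p.1 ∧ p.1 ≤ p.2 ∧ p.2 ≤ 1} ∩
      {p : ℝ × ℝ | max p.1 (7/10) < p.2 ∧ p.1 < 7/10}) = ENNReal.ofReal (21/100) := by
  rw [volume_eq_intervalIntegral_of_slices (a := 7/10) (b := 1) (f := fun _ => 0)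
    (g := fun _ => 7/10) (by measurability) (by norm_num) (fun y hy => by norm_num)
    ((by fun_prop : Continuous _).intervalIntegrable _ _)
    (fun x y h => by simp only [mem_inter_iff, mem_ofPred_eq, max_lt_iff] at h; grind)
    (fun y hy x hx => by grind [max_lt_iff])]
  norm_num

theorem volume_topTwo_xh_xl :
    volume ({p : ℝ × ℝ | 0 ≤ p.1 ∧ p.1 ≤ p.2 ∧ p.2 ≤ 1} ∩
      {p : ℝ × ℝ | max p.1 (7/10) < p.2 ∧ 7/10 < p.1}) = ENNReal.ofReal (9/200) := by
  rw [volume_eq_intervalIntegral_of_slices (a := 7/10) (b := 1) (f := fun _ => 7/10)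
    (g := fun y => y) (by measurability) (by norm_num) (fun y hy => by grind)
    ((by fun_prop : Continuous _).intervalIntegrable _ _)
    (fun x y h => by simp only [mem_inter_iff, mem_ofPred_eq, max_lt_iff] at h; grind)
    (fun y hy x hx => by grind [max_lt_iff])]
  norm_num [integral_id]

theorem u_topk_containment_counterexample :
    -- x_h is the most likely top-1 ...
    (volume ({p : ℝ × ℝ | 0 ≤ p.1 ∧ p.1 ≤ p.2 ∧ p.2 ≤ 1} ∩
        {p : ℝ × ℝ | max p.1 (max (7/10) (69/100)) < p.2})).toReal /
      (volume {p : ℝ × ℝ | 0 ≤ p.1 ∧ p.1 ≤ p.2 ∧ p.2 ≤ 1}).toReal = 51/100 ∧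
    (volume ({p : ℝ × ℝ | 0 ≤ p.1 ∧ p.1 ≤ p.2 ∧ p.2 ≤ 1} ∩
        {p : ℝ × ℝ | max p.1 (max p.2 (69/100)) < 7/10})).toReal /
      (volume {p : ℝ × ℝ | 0 ≤ p.1 ∧ p.1 ≤ p.2 ∧ p.2 ≤ 1}).toReal = 49/100 ∧
    (49/100 : ℝ) < 51/100 ∧
    -- ... but the most likely top-2 sequence is (x_f⁺, x_f⁻), not starting with x_h
    (volume ({p : ℝ × ℝ | 0 ≤ p.1 ∧ p.1 ≤ p.2 ∧ p.2 ≤ 1} ∩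
        {p : ℝ × ℝ | max p.1 p.2 < 69/100})).toReal /
      (volume {p : ℝ × ℝ | 0 ≤ p.1 ∧ p.1 ≤ p.2 ∧ p.2 ≤ 1}).toReal = 4761/10000 ∧
    (volume ({p : ℝ × ℝ | 0 ≤ p.1 ∧ p.1 ≤ p.2 ∧ p.2 ≤ 1} ∩
        {p : ℝ × ℝ | max p.1 (7/10) < p.2 ∧ p.1 < 7/10})).toReal /
      (volume {p : ℝ × ℝ | 0 ≤ p.1 ∧ p.1 ≤ p.2 ∧ p.2 ≤ 1}).toReal = 42/100 ∧
    (volume ({p : ℝ × ℝ | 0 ≤ p.1 ∧ p.1 ≤ p.2 ∧ p.2 ≤ 1} ∩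
        {p : ℝ × ℝ | max p.1 (7/10) < p.2 ∧ 7/10 < p.1})).toReal /
      (volume {p : ℝ × ℝ | 0 ≤ p.1 ∧ p.1 ≤ p.2 ∧ p.2 ≤ 1}).toReal = 9/100 ∧
    (42/100 : ℝ) < 4761/10000 ∧ (9/100 : ℝ) < 4761/10000 := by
  rw [volume_triangle, volume_xh_isMax, volume_xfPlus_isMax, volume_topTwo_xfPlus_xfMinus,
    volume_topTwo_xh_xfPlus, volume_topTwo_xh_xl]
  norm_num
end

section
/- Counterexample to containment for global-top-k: let x_s ~ Uniform[0,1] and x_h ~ Uniform[0.45,1] be independent, and let x_l = 0.45 and x_f = 0.73 be constants. Then P(x_h > max(x_s, 0.73)) > P(0.73 > max(x_s, x_h)), i.e. P(x_h = max{x_s, x_f, x_h, x_l}) > P(x_f = max{x_s, x_f, x_h, x_l}), and yet P(x_f among top 2 of {x_s, x_f, x_h, x_l}) > P(x_h among top 2 of {x_s, x_f, x_h, x_l}). -/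
open MeasureTheory

theorem global_topk_containment_counterexample :
    -- p.1 = x_s ~ Uniform[0,1], p.2 = x_h ~ Uniform[0.45,1] independent;
    -- x_l = 0.45 and x_f = 0.73 are constants.
    let μ : Measure (ℝ × ℝ) :=
      (volume.restrict (Set.Icc (0:ℝ) 1)).prod
        ((volume (Set.Icc (9/20 : ℝ) 1))⁻¹ • volume.restrict (Set.Icc (9/20 : ℝ) 1))
    -- x_h is more likely than x_f to be the maximum ...
    μ {p : ℝ × ℝ | max p.1 (73/100) < p.2} > μ {p : ℝ × ℝ | max p.1 p.2 < 73/100} ∧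
    -- ... but x_f is more likely than x_h to be among the top-2 values
    μ {p : ℝ × ℝ | ¬(73/100 < p.1 ∧ 73/100 < p.2)} >
      μ {p : ℝ × ℝ | ¬(p.2 < p.1 ∧ p.2 < 73/100)} := by
  intro μ
  set k : ENNReal := (ENNReal.ofReal (11/20 : ℝ))⁻¹ with hkdef
  have hvol : volume (Set.Icc (9/20 : ℝ) 1) = ENNReal.ofReal (11/20 : ℝ) := by
    rw [Real.volume_Icc]; norm_num
  have hk0 : k ≠ 0 := by simp [hkdef]
  have hktop : k ≠ ⊤ := by simp [hkdef]
  have hrect : ∀ s t : Set ℝ, MeasurableSet s → MeasurableSet t →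
      μ (s ×ˢ t) = k * (volume (s ∩ Set.Icc (0:ℝ) 1) * volume (t ∩ Set.Icc (9/20:ℝ) 1)) := by
    intro s t hs ht
    show ((volume.restrict (Set.Icc (0:ℝ) 1)).prod _) _ = _
    rw [Measure.prod_prod, Measure.smul_apply, Measure.restrict_apply hs,
      Measure.restrict_apply ht, hvol, smul_eq_mul]
    ring
  -- interval intersection facts
  have e1 : Set.Iio (73/100 : ℝ) ∩ Set.Icc 0 1 = Set.Ico 0 (73/100) := by
    ext x
    simp only [Set.mem_inter_iff, Set.mem_Iio, Set.mem_Icc, Set.mem_Ico]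
    constructor
    · rintro ⟨h1, h2, h3⟩; exact ⟨h2, h1⟩
    · rintro ⟨h1, h2⟩; exact ⟨h2, h1, by linarith⟩
  have e2 : Set.Iio (73/100 : ℝ) ∩ Set.Icc (9/20) 1 = Set.Ico (9/20) (73/100) := by
    ext x
    simp only [Set.mem_inter_iff, Set.mem_Iio, Set.mem_Icc, Set.mem_Ico]
    constructor
    · rintro ⟨h1, h2, h3⟩; exact ⟨h2, h1⟩
    · rintro ⟨h1, h2⟩; exact ⟨h2, h1, by linarith⟩
  have e3 : Set.Ioi (73/100 : ℝ) ∩ Set.Icc (9/20) 1 = Set.Ioc (73/100) 1 := by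
    ext x
    simp only [Set.mem_inter_iff, Set.mem_Ioi, Set.mem_Icc, Set.mem_Ioc]
    constructor
    · rintro ⟨h1, h2, h3⟩; exact ⟨h1, h3⟩
    · rintro ⟨h1, h2⟩; exact ⟨h1, by linarith, h2⟩
  have e4 : Set.Ico (73/100 : ℝ) (9/10) ∩ Set.Icc 0 1 = Set.Ico (73/100) (9/10) := by
    apply Set.inter_eq_left.mpr
    intro x hx
    simp only [Set.mem_Ico] at hx
    exact ⟨by linarith [hx.1], by linarith [hx.2]⟩
  have e5 : Set.Ioi (9/10 : ℝ) ∩ Set.Icc (9/20) 1 = Set.Ioc (9/10) 1 := by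
    ext x
    simp only [Set.mem_inter_iff, Set.mem_Ioi, Set.mem_Icc, Set.mem_Ioc]
    constructor
    · rintro ⟨h1, h2, h3⟩; exact ⟨h1, h3⟩
    · rintro ⟨h1, h2⟩; exact ⟨h1, by linarith, h2⟩
  have e6 : Set.Ici (73/100 : ℝ) ∩ Set.Icc 0 1 = Set.Icc (73/100) 1 := by
    ext x
    simp only [Set.mem_inter_iff, Set.mem_Ici, Set.mem_Icc]
    constructor
    · rintro ⟨h1, h2, h3⟩; exact ⟨h1, h3⟩
    · rintro ⟨h1, h2⟩; exact ⟨h1, by linarith, h2⟩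
  have e7 : Set.Ici (73/100 : ℝ) ∩ Set.Icc (9/20) 1 = Set.Icc (73/100) 1 := by
    ext x
    simp only [Set.mem_inter_iff, Set.mem_Ici, Set.mem_Icc]
    constructor
    · rintro ⟨h1, h2, h3⟩; exact ⟨h1, h3⟩
    · rintro ⟨h1, h2⟩; exact ⟨h1, by linarith, h2⟩
  have e8 : Set.Iic (73/100 : ℝ) ∩ Set.Icc (9/20) 1 = Set.Icc (9/20) (73/100) := by
    ext x
    simp only [Set.mem_inter_iff, Set.mem_Iic, Set.mem_Icc]
    constructor
    · rintro ⟨h1, h2, h3⟩; exact ⟨h2, h1⟩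
    · rintro ⟨h1, h2⟩; exact ⟨h2, h1, by linarith⟩
  constructor
  · -- first inequality
    have hR : {p : ℝ × ℝ | max p.1 p.2 < 73/100} = Set.Iio (73/100 : ℝ) ×ˢ Set.Iio (73/100) := by
      ext p; simp [max_lt_iff]
    have hA1 : μ (Set.Iio (73/100 : ℝ) ×ˢ Set.Ioi (73/100 : ℝ)) =
        k * ENNReal.ofReal (73/100 * (27/100)) := by
      rw [hrect _ _ measurableSet_Iio measurableSet_Ioi, e1, e3, Real.volume_Ico,
        Real.volume_Ioc, ← ENNReal.ofReal_mul (by norm_num)]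
      norm_num
    have hA2 : μ (Set.Ico (73/100 : ℝ) (9/10) ×ˢ Set.Ioi (9/10 : ℝ)) =
        k * ENNReal.ofReal (17/100 * (1/10)) := by
      rw [hrect _ _ measurableSet_Ico measurableSet_Ioi, e4, e5, Real.volume_Ico,
        Real.volume_Ioc, ← ENNReal.ofReal_mul (by norm_num)]
      norm_num
    have hRval : μ {p : ℝ × ℝ | max p.1 p.2 < 73/100} =
        k * ENNReal.ofReal (73/100 * (28/100)) := by
      rw [hR, hrect _ _ measurableSet_Iio measurableSet_Iio, e1, e2, Real.volume_Ico,
        Real.volume_Ico, ← ENNReal.ofReal_mul (by norm_num)]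
      norm_num
    have hsub : (Set.Iio (73/100 : ℝ) ×ˢ Set.Ioi (73/100 : ℝ)) ∪
        (Set.Ico (73/100 : ℝ) (9/10) ×ˢ Set.Ioi (9/10 : ℝ)) ⊆
        {p : ℝ × ℝ | max p.1 (73/100) < p.2} := by
      rintro ⟨x, y⟩ (h | h) <;>
        simp only [Set.mem_prod, Set.mem_Iio, Set.mem_Ioi, Set.mem_Ico] at h <;>
        simp only [Set.mem_setOf_eq, max_lt_iff]
      · exact ⟨by linarith [h.1, h.2], h.2⟩
      · exact ⟨by linarith [h.1.2, h.2], by linarith [h.2]⟩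
    have hdisj : Disjoint (Set.Iio (73/100 : ℝ) ×ˢ Set.Ioi (73/100 : ℝ))
        (Set.Ico (73/100 : ℝ) (9/10) ×ˢ Set.Ioi (9/10 : ℝ)) := by
      apply Set.disjoint_left.mpr
      rintro ⟨x, y⟩ h1 h2
      simp only [Set.mem_prod, Set.mem_Iio, Set.mem_Ioi, Set.mem_Ico] at h1 h2
      linarith [h1.1, h2.1.1]
    have hunion := measure_union (μ := μ) hdisj ((measurableSet_Ico : MeasurableSet (Set.Ico (73/100:ℝ) (9/10))).prod (measurableSet_Ioi : MeasurableSet (Set.Ioi (9/10:ℝ))))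
    rw [hA1, hA2] at hunion
    calc μ {p : ℝ × ℝ | max p.1 p.2 < 73/100}
        = k * ENNReal.ofReal (73/100 * (28/100)) := hRval
      _ < k * ENNReal.ofReal (73/100 * (27/100)) + k * ENNReal.ofReal (17/100 * (1/10)) := by
          rw [← mul_add, ← ENNReal.ofReal_add (by norm_num) (by norm_num)]
          refine (ENNReal.mul_lt_mul_iff_right hk0 hktop).mpr ?_
          refine (ENNReal.ofReal_lt_ofReal_iff_of_nonneg (by norm_num)).mpr ?_
          norm_num
      _ = μ ((Set.Iio (73/100 : ℝ) ×ˢ Set.Ioi (73/100 : ℝ)) ∪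
            (Set.Ico (73/100 : ℝ) (9/10) ×ˢ Set.Ioi (9/10 : ℝ))) := hunion.symm
      _ ≤ μ {p : ℝ × ℝ | max p.1 (73/100) < p.2} := measure_mono hsub
  · -- second inequality
    have hB1 : μ (Set.Iio (73/100 : ℝ) ×ˢ (Set.univ : Set ℝ)) =
        k * ENNReal.ofReal (73/100 * (11/20)) := by
      rw [hrect _ _ measurableSet_Iio MeasurableSet.univ, e1, Set.univ_inter, Real.volume_Ico,
        Real.volume_Icc, ← ENNReal.ofReal_mul (by norm_num)]
      norm_num
    have hB2 : μ (Set.Ici (73/100 : ℝ) ×ˢ Set.Iic (73/100 : ℝ)) =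
        k * ENNReal.ofReal (27/100 * (28/100)) := by
      rw [hrect _ _ measurableSet_Ici measurableSet_Iic, e6, e8, Real.volume_Icc,
        Real.volume_Icc, ← ENNReal.ofReal_mul (by norm_num)]
      norm_num
    have hC2 : μ (Set.Ici (73/100 : ℝ) ×ˢ Set.Ici (73/100 : ℝ)) =
        k * ENNReal.ofReal (27/100 * (27/100)) := by
      rw [hrect _ _ measurableSet_Ici measurableSet_Ici, e6, e7, Real.volume_Icc,
        ← ENNReal.ofReal_mul (by norm_num)]
      norm_num
    have hdisjB : Disjoint (Set.Iio (73/100 : ℝ) ×ˢ (Set.univ : Set ℝ))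
        (Set.Ici (73/100 : ℝ) ×ˢ Set.Iic (73/100 : ℝ)) := by
      apply Set.disjoint_left.mpr
      rintro ⟨x, y⟩ h1 h2
      simp only [Set.mem_prod, Set.mem_Iio, Set.mem_univ, Set.mem_Ici, Set.mem_Iic] at h1 h2
      linarith [h1.1, h2.1]
    have hsubB : (Set.Iio (73/100 : ℝ) ×ˢ (Set.univ : Set ℝ)) ∪
        (Set.Ici (73/100 : ℝ) ×ˢ Set.Iic (73/100 : ℝ)) ⊆
        {p : ℝ × ℝ | ¬(73/100 < p.1 ∧ 73/100 < p.2)} := by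
      rintro ⟨x, y⟩ (h | h) <;>
        simp only [Set.mem_prod, Set.mem_Iio, Set.mem_univ, Set.mem_Ici, Set.mem_Iic] at h <;>
        simp only [Set.mem_setOf_eq, not_and, not_lt]
      · intro hx; linarith [h.1]
      · intro _; exact h.2
    have hsupC : {p : ℝ × ℝ | ¬(p.2 < p.1 ∧ p.2 < 73/100)} ⊆
        (Set.Iio (73/100 : ℝ) ×ˢ (Set.univ : Set ℝ)) ∪
        (Set.Ici (73/100 : ℝ) ×ˢ Set.Ici (73/100 : ℝ)) := by
      rintro ⟨x, y⟩ h
      simp only [Set.mem_setOf_eq, not_and, not_lt] at h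
      simp only [Set.mem_union, Set.mem_prod, Set.mem_Iio, Set.mem_univ, Set.mem_Ici]
      by_cases hx : x < 73/100
      · exact Or.inl ⟨hx, trivial⟩
      · push_neg at hx
        refine Or.inr ⟨hx, ?_⟩
        by_contra hy
        push_neg at hy
        linarith [h (by linarith)]
    have hBunion := measure_union (μ := μ) hdisjB ((measurableSet_Ici : MeasurableSet (Set.Ici (73/100:ℝ))).prod (measurableSet_Iic : MeasurableSet (Set.Iic (73/100:ℝ))))
    rw [hB1, hB2] at hBunion
    have hCunion : μ ((Set.Iio (73/100 : ℝ) ×ˢ (Set.univ : Set ℝ)) ∪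
        (Set.Ici (73/100 : ℝ) ×ˢ Set.Ici (73/100 : ℝ))) ≤
        k * ENNReal.ofReal (73/100 * (11/20)) + k * ENNReal.ofReal (27/100 * (27/100)) := by
      refine (measure_union_le _ _).trans ?_
      rw [hB1, hC2]
    calc μ {p : ℝ × ℝ | ¬(p.2 < p.1 ∧ p.2 < 73/100)}
        ≤ k * ENNReal.ofReal (73/100 * (11/20)) + k * ENNReal.ofReal (27/100 * (27/100)) :=
          (measure_mono hsupC).trans hCunion
      _ < k * ENNReal.ofReal (73/100 * (11/20)) + k * ENNReal.ofReal (27/100 * (28/100)) := by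
          rw [← mul_add, ← mul_add, ← ENNReal.ofReal_add (by norm_num) (by norm_num),
            ← ENNReal.ofReal_add (by norm_num) (by norm_num)]
          refine (ENNReal.mul_lt_mul_iff_right hk0 hktop).mpr ?_
          refine (ENNReal.ofReal_lt_ofReal_iff_of_nonneg (by norm_num)).mpr ?_
          norm_num
      _ = μ ((Set.Iio (73/100 : ℝ) ×ˢ (Set.univ : Set ℝ)) ∪
            (Set.Ici (73/100 : ℝ) ×ˢ Set.Iic (73/100 : ℝ))) := hBunion.symm
      _ ≤ μ {p : ℝ × ℝ | ¬(73/100 < p.1 ∧ 73/100 < p.2)} := measure_mono hsubB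
end

section
/- Non-stability of uniform interpolation on a tree: consider the constraint set on variables x_r, x_a, x_b, x_c, x_d, x_e with order constraints x_r ≤ x_a, x_a ≤ x_b ≤ x_c, x_a ≤ x_d ≤ x_e and exact values x_r = 0, x_c = 1/2, x_e = 1. Under the uniform distribution on the admissible polytope {(x_a,x_b,x_d) : 0 ≤ x_a, x_a ≤ x_b ≤ 1/2, x_a ≤ x_d ≤ 1}, the expected value of x_a is 3/20 and the expected value of x_b is 13/40; but if one additionally imposes x_b = 13/40, then the expected value of x_a under the uniform distribution on the new polytope is 611/4020, which differs from 3/20. -/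
/-!
For fixed `x_a = a` the remaining coordinates of the polytope range over the box
`[a, c] × [a, e]`, and over the interval `[a, e]` once `x_b` is pinned, so Fubini turns every
volume and first moment into a polynomial integral in `a`. Pinning `x_b` at its mean replaces
the weight `(c - a)(e - a)` of `a` by `e - a`, which shifts the mean of `x_a`.
-/

open MeasureTheory Set

theorem setIntegral_prod_fiberwise {α β E : Type*} [MeasurableSpace α] [MeasurableSpace β]
    [NormedAddCommGroup E] [NormedSpace ℝ E] {μ : Measure α} {ν : Measure β} [SFinite μ]
    [SFinite ν] {s : Set α} {t : α → Set β} {f : α × β → E}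
    (hS : MeasurableSet {p : α × β | p.1 ∈ s ∧ p.2 ∈ t p.1}) (hs : MeasurableSet s)
    (hf : IntegrableOn f {p : α × β | p.1 ∈ s ∧ p.2 ∈ t p.1} (μ.prod ν)) :
    ∫ p in {p : α × β | p.1 ∈ s ∧ p.2 ∈ t p.1}, f p ∂μ.prod ν =
      ∫ a in s, ∫ b in t a, f (a, b) ∂ν ∂μ := by
  rw [← integral_indicator hS, integral_prod _ ((integrable_indicator_iff hS).2 hf),
    ← integral_indicator hs]
  congr 1 with a
  by_cases ha : a ∈ s
  · have ht : MeasurableSet (t a) := by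
      simpa [ha] using hS.preimage (measurable_prodMk_left (x := a))
    rw [indicator_of_mem ha, ← integral_indicator ht]
    congr 1 with b
    by_cases hb : b ∈ t a <;> simp [indicator, ha, hb]
  · simp [indicator, ha]

theorem integral_Icc_eq_intervalIntegral {E : Type*} [NormedAddCommGroup E] [NormedSpace ℝ E]
    {a b : ℝ} (hab : a ≤ b) (f : ℝ → E) : ∫ x in Icc a b, f x = ∫ x in a..b, f x := by
  rw [integral_Icc_eq_integral_Ioc, intervalIntegral.integral_of_le hab]

theorem setIntegral_Icc_prod_Icc_mul {a b c d : ℝ} (hab : a ≤ b) (hcd : c ≤ d)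
    (f g : ℝ → ℝ) :
    ∫ y in Icc a b ×ˢ Icc c d, f y.1 * g y.2 =
      (∫ x in a..b, f x) * ∫ x in c..d, g x := by
  rw [Measure.volume_eq_prod, setIntegral_prod_mul, integral_Icc_eq_intervalIntegral hab,
    integral_Icc_eq_intervalIntegral hcd]

/-- The constraint set of the tree with `x_r = 0`, `x_c = c`, `x_e = e`, in the coordinates
`(x_a, x_b, x_d)`. -/
def treePolytope (c e : ℝ) : Set (ℝ × ℝ × ℝ) :=
  {p | 0 ≤ p.1 ∧ p.1 ≤ p.2.1 ∧ p.2.1 ≤ c ∧ p.1 ≤ p.2.2 ∧ p.2.2 ≤ e}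

/-- The same constraint set with `x_b = β` imposed as well, in the coordinates `(x_a, x_d)`. -/
def pinnedPolytope (β e : ℝ) : Set (ℝ × ℝ) :=
  {q | 0 ≤ q.1 ∧ q.1 ≤ β ∧ q.1 ≤ q.2 ∧ q.2 ≤ e}

theorem treePolytope_eq_fiberwise (c e : ℝ) :
    treePolytope c e = {p | p.1 ∈ Icc 0 c ∧ p.2 ∈ Icc p.1 c ×ˢ Icc p.1 e} := by
  ext ⟨a, b, d⟩
  simp only [treePolytope, mem_ofPred_eq, mem_Icc, mem_prod]
  constructor
  · rintro ⟨h0, hab, hbc, had, hde⟩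
    exact ⟨⟨h0, hab.trans hbc⟩, ⟨hab, hbc⟩, had, hde⟩
  · rintro ⟨⟨h0, -⟩, ⟨hab, hbc⟩, had, hde⟩
    exact ⟨h0, hab, hbc, had, hde⟩

theorem pinnedPolytope_eq_fiberwise (β e : ℝ) :
    pinnedPolytope β e = {q | q.1 ∈ Icc 0 β ∧ q.2 ∈ Icc q.1 e} := by
  ext ⟨a, d⟩
  simp only [pinnedPolytope, mem_ofPred_eq, mem_Icc, and_assoc]

theorem isCompact_treePolytope (c e : ℝ) : IsCompact (treePolytope c e) := by
  refine (isCompact_Icc (a := 0) (b := (c, c, e))).of_isClosed_subset ?_ ?_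
  · simp only [treePolytope, ofPred_and]
    refine .inter (isClosed_le ?_ ?_) (.inter (isClosed_le ?_ ?_) (.inter (isClosed_le ?_ ?_)
      (.inter (isClosed_le ?_ ?_) (isClosed_le ?_ ?_)))) <;> fun_prop
  · rintro ⟨a, b, d⟩ ⟨h0, hab, hbc, had, hde⟩
    exact ⟨⟨h0, h0.trans hab, h0.trans had⟩, ⟨hab.trans hbc, hbc, hde⟩⟩

theorem isCompact_pinnedPolytope (β e : ℝ) : IsCompact (pinnedPolytope β e) := by
  refine (isCompact_Icc (a := 0) (b := (β, e))).of_isClosed_subset ?_ ?_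
  · simp only [pinnedPolytope, ofPred_and]
    refine .inter (isClosed_le ?_ ?_) (.inter (isClosed_le ?_ ?_)
      (.inter (isClosed_le ?_ ?_) (isClosed_le ?_ ?_))) <;> fun_prop
  · rintro ⟨a, d⟩ ⟨h0, haβ, had, hde⟩
    exact ⟨⟨h0, h0.trans had⟩, ⟨haβ, hde⟩⟩

theorem setIntegral_treePolytope {c e : ℝ} (hc : 0 ≤ c) (hce : c ≤ e) {φ f g : ℝ → ℝ}
    (hφ : Continuous φ) (hf : Continuous f) (hg : Continuous g) :
    ∫ p in treePolytope c e, φ p.1 * (f p.2.1 * g p.2.2) =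
      ∫ a in 0..c, φ a * ((∫ x in a..c, f x) * ∫ x in a..e, g x) := by
  have hK := isCompact_treePolytope c e
  rw [treePolytope_eq_fiberwise] at hK ⊢
  rw [Measure.volume_eq_prod,
    setIntegral_prod_fiberwise (t := fun a => Icc a c ×ˢ Icc a e) hK.isClosed.measurableSet
      measurableSet_Icc ((by fun_prop : Continuous _).continuousOn.integrableOn_compact hK),
    ← integral_Icc_eq_intervalIntegral hc]
  refine setIntegral_congr_fun measurableSet_Icc fun a ha => ?_
  dsimp only
  rw [integral_const_mul, setIntegral_Icc_prod_Icc_mul ha.2 (ha.2.trans hce)]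

theorem setIntegral_pinnedPolytope {β e : ℝ} (hβ : 0 ≤ β) (hβe : β ≤ e) {φ g : ℝ → ℝ}
    (hφ : Continuous φ) (hg : Continuous g) :
    ∫ q in pinnedPolytope β e, φ q.1 * g q.2 = ∫ a in 0..β, φ a * ∫ x in a..e, g x := by
  have hK := isCompact_pinnedPolytope β e
  rw [pinnedPolytope_eq_fiberwise] at hK ⊢
  rw [Measure.volume_eq_prod,
    setIntegral_prod_fiberwise (t := fun a => Icc a e) hK.isClosed.measurableSet
      measurableSet_Icc ((by fun_prop : Continuous _).continuousOn.integrableOn_compact hK),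
    ← integral_Icc_eq_intervalIntegral hβ]
  refine setIntegral_congr_fun measurableSet_Icc fun a ha => ?_
  dsimp only
  rw [integral_const_mul, integral_Icc_eq_intervalIntegral (ha.2.trans hβe)]

theorem measureReal_treePolytope {c e : ℝ} (hc : 0 ≤ c) (hce : c ≤ e) :
    volume.real (treePolytope c e) = c ^ 2 * (3 * e - c) / 6 := by
  have h := setIntegral_treePolytope hc hce (φ := fun _ => 1) (f := fun _ => 1)
    (g := fun _ => 1) continuous_const continuous_const continuous_const
  simp only [mul_one, one_mul, setIntegral_one_eq_measureReal, intervalIntegral.integral_const,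
    smul_eq_mul] at h
  rw [h, intervalIntegral.integral_deriv_eq_sub'
    (fun a => a * (c * e) - (c + e) * a ^ 2 / 2 + a ^ 3 / 3) ?_
    (fun _ _ => by fun_prop) (by fun_prop)]
  · ring
  · ext a
    simp (disch := fun_prop) only [deriv_fun_add, deriv_fun_sub, deriv_div_const, deriv_fun_pow,
      deriv_id'', deriv_const_mul_field', deriv_mul_const_field']
    ring

theorem integral_fst_treePolytope {c e : ℝ} (hc : 0 ≤ c) (hce : c ≤ e) :
    ∫ p in treePolytope c e, p.1 = c ^ 3 * (2 * e - c) / 12 := by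
  have h := setIntegral_treePolytope hc hce (φ := id) (f := fun _ => 1)
    (g := fun _ => 1) continuous_id continuous_const continuous_const
  simp only [mul_one, id, intervalIntegral.integral_const, smul_eq_mul] at h
  rw [h, intervalIntegral.integral_deriv_eq_sub'
    (fun a => c * e * a ^ 2 / 2 - (c + e) * a ^ 3 / 3 + a ^ 4 / 4) ?_
    (fun _ _ => by fun_prop) (by fun_prop)]
  · ring
  · ext a
    simp (disch := fun_prop) only [deriv_fun_add, deriv_fun_sub, deriv_div_const, deriv_fun_pow,
      deriv_id'', deriv_const_mul_field']
    ring

theorem integral_snd_fst_treePolytope {c e : ℝ} (hc : 0 ≤ c) (hce : c ≤ e) :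
    ∫ p in treePolytope c e, p.2.1 = c ^ 3 * (8 * e - 3 * c) / 24 := by
  have h := setIntegral_treePolytope hc hce (φ := fun _ => 1) (f := id)
    (g := fun _ => 1) continuous_const continuous_id continuous_const
  simp only [mul_one, one_mul, id, integral_id, intervalIntegral.integral_const, smul_eq_mul] at h
  rw [h, intervalIntegral.integral_deriv_eq_sub'
    (fun a => (a * (c ^ 2 * e) - c ^ 2 * a ^ 2 / 2 - e * a ^ 3 / 3 + a ^ 4 / 4) / 2) ?_
    (fun _ _ => by fun_prop) (by fun_prop)]
  · ring
  · ext a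
    simp (disch := fun_prop) only [deriv_fun_add, deriv_fun_sub, deriv_div_const, deriv_fun_pow,
      deriv_id'', deriv_const_mul_field', deriv_mul_const_field']
    ring

theorem measureReal_pinnedPolytope {β e : ℝ} (hβ : 0 ≤ β) (hβe : β ≤ e) :
    volume.real (pinnedPolytope β e) = β * (2 * e - β) / 2 := by
  have h := setIntegral_pinnedPolytope hβ hβe (φ := fun _ => 1) (g := fun _ => 1)
    continuous_const continuous_const
  simp only [mul_one, one_mul, setIntegral_one_eq_measureReal, intervalIntegral.integral_const,
    smul_eq_mul] at h
  rw [h, intervalIntegral.integral_deriv_eq_sub' (fun a => a * e - a ^ 2 / 2) ?_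
    (fun _ _ => by fun_prop) (by fun_prop)]
  · ring
  · ext a
    simp (disch := fun_prop) only [deriv_fun_sub, deriv_div_const, deriv_fun_pow,
      deriv_id'', deriv_mul_const_field']
    ring

theorem integral_fst_pinnedPolytope {β e : ℝ} (hβ : 0 ≤ β) (hβe : β ≤ e) :
    ∫ q in pinnedPolytope β e, q.1 = β ^ 2 * (3 * e - 2 * β) / 6 := by
  have h := setIntegral_pinnedPolytope hβ hβe (φ := id) (g := fun _ => 1)
    continuous_id continuous_const
  simp only [mul_one, id, intervalIntegral.integral_const, smul_eq_mul] at h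
  rw [h, intervalIntegral.integral_deriv_eq_sub' (fun a => e * a ^ 2 / 2 - a ^ 3 / 3) ?_
    (fun _ _ => by fun_prop) (by fun_prop)]
  · ring
  · ext a
    simp (disch := fun_prop) only [deriv_fun_sub, deriv_div_const, deriv_fun_pow,
      deriv_id'', deriv_const_mul_field']
    ring

theorem uniform_interpolation_not_stable :
    -- coordinates: p.1 = x_a, p.2.1 = x_b, p.2.2 = x_d;
    -- constraints 0 ≤ x_a, x_a ≤ x_b ≤ 1/2, x_a ≤ x_d ≤ 1
    (∫ p in {p : ℝ × ℝ × ℝ | 0 ≤ p.1 ∧ p.1 ≤ p.2.1 ∧ p.2.1 ≤ 1/2 ∧ p.1 ≤ p.2.2 ∧ p.2.2 ≤ 1},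
        p.1) /
      (volume {p : ℝ × ℝ × ℝ |
        0 ≤ p.1 ∧ p.1 ≤ p.2.1 ∧ p.2.1 ≤ 1/2 ∧ p.1 ≤ p.2.2 ∧ p.2.2 ≤ 1}).toReal = 3/20 ∧
    (∫ p in {p : ℝ × ℝ × ℝ | 0 ≤ p.1 ∧ p.1 ≤ p.2.1 ∧ p.2.1 ≤ 1/2 ∧ p.1 ≤ p.2.2 ∧ p.2.2 ≤ 1},
        p.2.1) /
      (volume {p : ℝ × ℝ × ℝ |
        0 ≤ p.1 ∧ p.1 ≤ p.2.1 ∧ p.2.1 ≤ 1/2 ∧ p.1 ≤ p.2.2 ∧ p.2.2 ≤ 1}).toReal = 13/40 ∧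
    -- after additionally imposing x_b = 13/40 (q.1 = x_a, q.2 = x_d):
    (∫ q in {q : ℝ × ℝ | 0 ≤ q.1 ∧ q.1 ≤ 13/40 ∧ q.1 ≤ q.2 ∧ q.2 ≤ 1}, q.1) /
      (volume {q : ℝ × ℝ | 0 ≤ q.1 ∧ q.1 ≤ 13/40 ∧ q.1 ≤ q.2 ∧ q.2 ≤ 1}).toReal
      = 611/4020 ∧
    (611/4020 : ℝ) ≠ 3/20 := by
  have hc : (0 : ℝ) ≤ 1 / 2 := by norm_num
  have hce : (1 / 2 : ℝ) ≤ 1 := by norm_num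
  have hβ : (0 : ℝ) ≤ 13 / 40 := by norm_num
  have hβe : (13 / 40 : ℝ) ≤ 1 := by norm_num
  rw [← treePolytope.eq_1, ← pinnedPolytope.eq_1, ← measureReal_def, ← measureReal_def,
    measureReal_treePolytope hc hce, integral_fst_treePolytope hc hce,
    integral_snd_fst_treePolytope hc hce, measureReal_pinnedPolytope hβ hβe,
    integral_fst_pinnedPolytope hβ hβe]
  norm_num
end

section
/- Uniqueness of balanced stable interpolation on chains: suppose f assigns to each finite chain 0 = y_0, x_1, ..., x_n, y_1 = 1 (ordered y_0 ≤ x_1 ≤ ... ≤ x_n ≤ y_1 with y_0, y_1 fixed values a ≤ b) values f(x_1),...,f(x_n) ∈ [a,b] such that: (balanced) if n = 1 then f(x_1) = (a+b)/2, and (stable) fixing any x_i to f(x_i) and splitting the chain into the two subchains does not change the values assigned to the other variables. Then f(x_i) = a + (i/(n+1))·(b-a) for all i. -/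
/-!
Induction on the number `n` of interior variables. For `n ≥ 2`, stability at the first and at
the last variable exhibits the chain as a chain with `n - 1` interior variables over `[v, b]` and
over `[a, w]`, where `v` and `w` are the first and last values. By induction both subchains are
equally spaced, which gives two linear equations in `v` and `w` whose only solution is
`v = a + (b - a) / (n + 1)`; the other values are then read off the subchain over `[v, b]`.
-/

namespace ChainInterpolation

variable (f : ℝ → ℝ → (n : ℕ) → Fin n → ℝ)

def IsBalanced : Prop :=
  ∀ a b : ℝ, a ≤ b → ∀ i : Fin 1, f a b 1 i = (a + b) / 2

def IsStable : Prop :=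
  ∀ a b : ℝ, a ≤ b → ∀ n : ℕ, ∀ i : Fin n,
    (∀ j : Fin (i : ℕ), f a (f a b n i) (i : ℕ) j
        = f a b n ⟨(j : ℕ), lt_trans j.isLt i.isLt⟩) ∧
    (∀ j : Fin (n - (i : ℕ) - 1), f (f a b n i) b (n - (i : ℕ) - 1) j
        = f a b n ⟨(i : ℕ) + 1 + (j : ℕ), by omega⟩)

def MapsToIcc : Prop :=
  ∀ a b : ℝ, a ≤ b → ∀ n : ℕ, ∀ i : Fin n, f a b n i ∈ Set.Icc a b

variable {f}

theorem IsStable.apply_succ (hf : IsStable f) {a b : ℝ} (hab : a ≤ b) {n : ℕ} (k : Fin n) :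
    f a b (n + 1) k.succ = f (f a b (n + 1) 0) b n k := by
  refine (((hf a b hab (n + 1) 0).2 k).trans ?_).symm
  congr 1
  ext
  simp [add_comm]

theorem IsStable.apply_castSucc (hf : IsStable f) {a b : ℝ} (hab : a ≤ b) {n : ℕ} (k : Fin n) :
    f a b (n + 1) k.castSucc = f a (f a b (n + 1) (Fin.last n)) n k :=
  ((hf a b hab (n + 1) (Fin.last n)).1 k).symm

theorem first_eq_of_overlapping_subdivisions {m a b v w : ℝ} (hm : 0 ≤ m)
    (hw : w = v + (m + 1) / (m + 2) * (b - v)) (hv : v = a + 1 / (m + 2) * (w - a)) :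
    v = a + 1 / (m + 3) * (b - a) := by
  have hm2 : m + 2 ≠ 0 := by positivity
  have hm3 : m + 3 ≠ 0 := by positivity
  field_simp at hw hv ⊢
  have key : (m + 1) * (v * (m + 3) - (a * (m + 2) + b)) = 0 := by
    linear_combination (m + 2) * hv + hw
  have hm1 : m + 1 ≠ 0 := by positivity
  linear_combination (mul_eq_zero.mp key).resolve_left hm1

theorem eq_of_isBalanced_of_isStable (hmem : MapsToIcc f) (hbal : IsBalanced f)
    (hstab : IsStable f) (n : ℕ) {a b : ℝ} (hab : a ≤ b) (i : Fin n) :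
    f a b n i = a + (((i : ℕ) + 1) / (n + 1)) * (b - a) := by
  induction n using Nat.strong_induction_on generalizing a b with
  | _ n ih =>
  match n, i with
  | 1, i =>
    rw [hbal a b hab, Subsingleton.elim i 0]
    norm_num
    ring
  | m + 2, i =>
    set v := f a b (m + 2) 0
    set w := f a b (m + 2) (Fin.last (m + 1))
    have hsucc (k : Fin (m + 1)) :
        f a b (m + 2) k.succ = v + ((k : ℝ) + 1) / (m + 2) * (b - v) := by
      rw [hstab.apply_succ hab, ih (m + 1) (by omega) (hmem a b hab _ 0).2]
      push_cast; ring
    have hcastSucc (k : Fin (m + 1)) :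
        f a b (m + 2) k.castSucc = a + ((k : ℝ) + 1) / (m + 2) * (w - a) := by
      rw [hstab.apply_castSucc hab, ih (m + 1) (by omega) (hmem a b hab _ _).1]
      push_cast; ring
    have hv : v = a + 1 / ((m : ℝ) + 3) * (b - a) := by
      refine first_eq_of_overlapping_subdivisions (w := w) m.cast_nonneg ?_ ?_
      · simpa [w, ← Fin.succ_last] using hsucc (Fin.last m)
      · simpa using hcastSucc 0
    cases i using Fin.cases with
    | zero => show v = _; rw [hv, Fin.val_zero]; push_cast; ring
    | succ k =>
      rw [hsucc k, hv, Fin.val_succ]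
      push_cast
      field_simp
      ring

end ChainInterpolation

theorem unique_balanced_stable_interpolation_on_chains
    (f : ℝ → ℝ → (n : ℕ) → Fin n → ℝ)
    -- the scheme produces a nondecreasing tuple of values in [a,b]
    (hrange : ∀ a b : ℝ, a ≤ b → ∀ n : ℕ, Monotone (f a b n) ∧ ∀ i : Fin n, f a b n i ∈ Set.Icc a b)
    -- balanced: a single interior variable is interpolated to the midpoint
    (hbal : ∀ a b : ℝ, a ≤ b → ∀ i : Fin 1, f a b 1 i = (a + b) / 2)
    -- stable: fixing x_i to its value and splitting the chain reproduces the same values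
    (hstab : ∀ a b : ℝ, a ≤ b → ∀ n : ℕ, ∀ i : Fin n,
      (∀ j : Fin (i : ℕ), f a (f a b n i) (i : ℕ) j
          = f a b n ⟨(j : ℕ), lt_trans j.isLt i.isLt⟩) ∧
      (∀ j : Fin (n - (i : ℕ) - 1), f (f a b n i) b (n - (i : ℕ) - 1) j
          = f a b n ⟨(i : ℕ) + 1 + (j : ℕ), by have h1 := j.isLt; have h2 := i.isLt; omega⟩)) :
    ∀ a b : ℝ, a ≤ b → ∀ n : ℕ, ∀ i : Fin n,
      f a b n i = a + (((i : ℕ) + 1) / (n + 1)) * (b - a) := by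
  intro a b hab n i
  exact ChainInterpolation.eq_of_isBalanced_of_isStable
    (fun a b hab n i => (hrange a b hab n).2 i) hbal hstab n hab i
end
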